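/- arXiv:1505.02804 — 3 statements merged into one kernel-verified Lean document; each statement's English description precedes it below -/
import Mathlib

section
/- For any fixed integer k ≥ 1, the map λ ↦ λ f_{k-1}(λ)/f_k(λ) is a strictly increasing bijection from (0,∞) onto (k,∞). -/
/-!
Write `f_k(λ) = e^{-λ} λ^k / k! · S_k(λ)` with `S_k(λ) = ∑_j k!/(k+j)! λ^j`. Since
`S_{k-1}(λ) = 1 + λ/k · S_k(λ)`, the conditional mean is `λ + k / S_k(λ)`, a formula that
extends continuously to `λ = 0` with value `k`.
The coefficients `c_j = k!/(k+j)!` satisfy `(k+1) c_{i+j+1} ≤ c_i c_j`; through the Cauchy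
product this gives `(k+1) (S_k(y) - S_k(x)) ≤ (y - x) S_k(x) S_k(y)`, so `k / S_k` decreases
with slope at most `k/(k+1) < 1` and the mean is strictly increasing on `[0, ∞)`. As the mean
exceeds `λ`, the intermediate value theorem on `[0, t]` shows that every `t > k` is attained.
-/

open MeasureTheory Filter Finset

/-- Poisson tail: `pf t l = e^{-l} * sum_{i >= t} l^i / i!`. -/
noncomputable def pf (t : ℕ) (l : ℝ) : ℝ :=
  Real.exp (-l) * ∑' i : ℕ, if t ≤ i then l ^ i / (Nat.factorial i) else 0

open Nat

theorem mul_tsum_sub_tsum_le_of_mul_coeff_le {a : ℕ → ℝ} {C x y : ℝ} (ha : ∀ n, 0 ≤ a n)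
    (hC : ∀ i j, C * a (i + j + 1) ≤ a i * a j) (hx : 0 ≤ x) (hxy : x ≤ y)
    (hy : Summable fun n => a n * y ^ n) :
    C * (∑' n, a n * y ^ n - ∑' n, a n * x ^ n) ≤
      (y - x) * ((∑' n, a n * y ^ n) * ∑' n, a n * x ^ n) := by
  have hx' : Summable fun n => a n * x ^ n :=
    hy.of_nonneg_of_le (fun n => by have := ha n; positivity)
      fun n => mul_le_mul_of_nonneg_left (pow_le_pow_left₀ hx hxy n) (ha n)
  have hxn := summable_norm_iff.mpr hx'
  have hyn := summable_norm_iff.mpr hy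
  have hterm : ∀ n, C * (a (n + 1) * y ^ (n + 1) - a (n + 1) * x ^ (n + 1)) ≤
      (y - x) * ∑ i ∈ range (n + 1), a i * y ^ i * (a (n - i) * x ^ (n - i)) := by
    intro n
    have hgeom :
        y ^ (n + 1) - x ^ (n + 1) = (y - x) * ∑ i ∈ range (n + 1), y ^ i * x ^ (n - i) := by
      rw [← geom_sum₂_mul, mul_comm, add_tsub_cancel_right]
    rw [← mul_sub, hgeom]
    simp only [mul_sum]
    refine sum_le_sum fun i hi => ?_
    have hcoeff := hC i (n - i)
    rw [show i + (n - i) + 1 = n + 1 by have := mem_range.mp hi; omega] at hcoeff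
    have hP : 0 ≤ (y - x) * (y ^ i * x ^ (n - i)) := by
      have := pow_nonneg (hx.trans hxy) i
      have := pow_nonneg hx (n - i)
      have := sub_nonneg.mpr hxy
      positivity
    calc C * (a (n + 1) * ((y - x) * (y ^ i * x ^ (n - i))))
        = C * a (n + 1) * ((y - x) * (y ^ i * x ^ (n - i))) := by ring
      _ ≤ a i * a (n - i) * ((y - x) * (y ^ i * x ^ (n - i))) :=
        mul_le_mul_of_nonneg_right hcoeff hP
      _ = (y - x) * (a i * y ^ i * (a (n - i) * x ^ (n - i))) := by ring
  calc C * (∑' n, a n * y ^ n - ∑' n, a n * x ^ n)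
      = ∑' n, C * (a (n + 1) * y ^ (n + 1) - a (n + 1) * x ^ (n + 1)) := by
        rw [← hy.tsum_sub hx', (hy.sub hx').tsum_eq_zero_add, tsum_mul_left]
        simp
    _ ≤ ∑' n, (y - x) * ∑ i ∈ range (n + 1), a i * y ^ i * (a (n - i) * x ^ (n - i)) :=
        Summable.tsum_le_tsum hterm (((summable_nat_add_iff 1).mpr (hy.sub hx')).mul_left C)
          ((summable_norm_sum_mul_range_of_summable_norm hyn hxn).of_norm.mul_left _)
    _ = (y - x) * ((∑' n, a n * y ^ n) * ∑' n, a n * x ^ n) := by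
        rw [tsum_mul_left, tsum_mul_tsum_eq_tsum_sum_range_of_summable_norm hyn hxn]

theorem succ_mul_factorial_add_mul_factorial_add_le (k i j : ℕ) :
    (k + 1) * ((k + i)! * (k + j)!) ≤ k ! * (k + i + j + 1)! := by
  rw [show k + i + j + 1 = k + i + (j + 1) by ring, ← factorial_mul_ascFactorial k j,
    ← factorial_mul_ascFactorial (k + i) (j + 1), ascFactorial_succ]
  have hasc : (k + 1).ascFactorial j ≤ (k + i + 1).ascFactorial j := ascFactorial_le j (by omega)
  calc (k + 1) * ((k + i)! * (k ! * (k + 1).ascFactorial j))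
      = k ! * ((k + i)! * ((k + 1) * (k + 1).ascFactorial j)) := by ring
    _ ≤ k ! * ((k + i)! * ((k + i + 1 + j) * (k + i + 1).ascFactorial j)) := by
        gcongr k ! * ((k + i)! * ?_)
        exact Nat.mul_le_mul (by omega) hasc

noncomputable def tailCoeff (k j : ℕ) : ℝ := (k ! : ℝ) / (k + j)!

noncomputable def tailSeries (k : ℕ) (l : ℝ) : ℝ := ∑' j, tailCoeff k j * l ^ j

lemma tailCoeff_pos (k j : ℕ) : 0 < tailCoeff k j := by unfold tailCoeff; positivity

@[simp]
lemma tailCoeff_zero (k : ℕ) : tailCoeff k 0 = 1 := by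
  simp [tailCoeff, factorial_ne_zero]

lemma tailCoeff_succ (k j : ℕ) : tailCoeff k (j + 1) = tailCoeff (k + 1) j / (k + 1) := by
  rw [tailCoeff, tailCoeff, show k + (j + 1) = k + 1 + j by ring, factorial_succ]
  push_cast
  field_simp

lemma tailCoeff_le_inv_factorial (k j : ℕ) : tailCoeff k j ≤ 1 / j ! := by
  rw [tailCoeff, div_le_div_iff₀ (by positivity) (by positivity), one_mul]
  exact_mod_cast Nat.le_of_dvd (factorial_pos _) (factorial_mul_factorial_dvd_factorial_add k j)

lemma succ_mul_tailCoeff_le (k i j : ℕ) :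
    (k + 1 : ℝ) * tailCoeff k (i + j + 1) ≤ tailCoeff k i * tailCoeff k j := by
  have h := succ_mul_factorial_add_mul_factorial_add_le k i j
  rw [tailCoeff, tailCoeff, tailCoeff, mul_div_assoc', _root_.div_mul_div_comm,
    div_le_div_iff₀ (by positivity) (by positivity), show k + (i + j + 1) = k + i + j + 1 by ring]
  calc ((k : ℝ) + 1) * k ! * ((k + i)! * (k + j)!)
      = k ! * ((k + 1) * ((k + i)! * (k + j)!)) := by ring
    _ ≤ k ! * (k ! * (k + i + j + 1)!) :=
        mul_le_mul_of_nonneg_left (by exact_mod_cast h) (by positivity)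
    _ = k ! * k ! * (k + i + j + 1)! := by ring

lemma summable_tailCoeff_mul_pow (k : ℕ) (l : ℝ) : Summable fun j => tailCoeff k j * l ^ j := by
  refine (Real.summable_pow_div_factorial |l|).of_norm_bounded fun j => ?_
  rw [norm_mul, norm_pow, Real.norm_of_nonneg (tailCoeff_pos k j).le, Real.norm_eq_abs]
  exact (mul_le_mul_of_nonneg_right (tailCoeff_le_inv_factorial k j) (by positivity)).trans_eq
    (one_div_mul_eq_div _ _)

@[simp]
lemma tailSeries_zero (k : ℕ) : tailSeries k 0 = 1 := by
  rw [tailSeries, tsum_eq_single 0 fun j hj => by simp [hj]]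
  simp

lemma one_le_tailSeries (k : ℕ) {l : ℝ} (hl : 0 ≤ l) : 1 ≤ tailSeries k l := by
  simpa [tailSeries] using (summable_tailCoeff_mul_pow k l).le_tsum 0
    fun j _ => by have := tailCoeff_pos k j; positivity

lemma tailSeries_pos (k : ℕ) {l : ℝ} (hl : 0 ≤ l) : 0 < tailSeries k l :=
  one_pos.trans_le (one_le_tailSeries k hl)

lemma tailSeries_eq_one_add (k : ℕ) (l : ℝ) :
    tailSeries k l = 1 + l / (k + 1) * tailSeries (k + 1) l := by
  rw [tailSeries, (summable_tailCoeff_mul_pow k l).tsum_eq_zero_add, tailSeries, ← tsum_mul_left]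
  simp only [tailCoeff_zero, pow_zero, mul_one, tailCoeff_succ, pow_succ]
  congr 1
  exact tsum_congr fun j => by ring

lemma continuousOn_tailSeries (k : ℕ) (T : ℝ) : ContinuousOn (tailSeries k) (Set.Icc 0 T) := by
  unfold tailSeries
  exact continuousOn_tsum (fun j => (continuous_const.mul (continuous_pow j)).continuousOn)
    (summable_tailCoeff_mul_pow k T) fun j l hl => by
      rw [norm_mul, norm_pow, Real.norm_of_nonneg (tailCoeff_pos k j).le,
        Real.norm_of_nonneg hl.1]
      exact mul_le_mul_of_nonneg_left (pow_le_pow_left₀ hl.1 hl.2 j) (tailCoeff_pos k j).le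

lemma pf_eq_mul_tailSeries (t : ℕ) (l : ℝ) :
    pf t l = Real.exp (-l) * (l ^ t / t !) * tailSeries t l := by
  have hshift : Summable fun i => l ^ (i + t) / (i + t)! :=
    (summable_nat_add_iff t).mpr (Real.summable_pow_div_factorial l)
  have hsum : Summable fun i => if t ≤ i then l ^ i / (i ! : ℝ) else 0 :=
    (summable_nat_add_iff t).mp (by simpa using hshift)
  have htail : ∑' j, (if t ≤ j + t then l ^ (j + t) / ((j + t)! : ℝ) else 0) =
      l ^ t / t ! * tailSeries t l := by
    rw [tailSeries, ← tsum_mul_left]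
    refine tsum_congr fun j => ?_
    rw [if_pos (by omega), tailCoeff, add_comm j t, pow_add]
    field_simp
  rw [pf, ← hsum.sum_add_tsum_nat_add t, sum_eq_zero fun i hi => by simp [mem_range.mp hi],
    zero_add, htail, mul_assoc]

lemma mul_pf_pred_div_pf {k : ℕ} (hk : 1 ≤ k) {l : ℝ} (hl : 0 < l) :
    l * pf (k - 1) l / pf k l = l + k / tailSeries k l := by
  obtain ⟨m, rfl⟩ : ∃ m, k = m + 1 := ⟨k - 1, by omega⟩
  have hS := tailSeries_pos (m + 1) hl.le
  rw [add_tsub_cancel_right, pf_eq_mul_tailSeries, pf_eq_mul_tailSeries, tailSeries_eq_one_add m,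
    factorial_succ, pow_succ]
  push_cast
  field_simp
  ring

lemma strictMonoOn_add_div_tailSeries (k : ℕ) :
    StrictMonoOn (fun l => l + k / tailSeries k l) (Set.Ici 0) := by
  intro x (hx : 0 ≤ x) y _ hxy
  have hSx := tailSeries_pos k hx
  have hSy := tailSeries_pos k (hx.trans hxy.le)
  have hgrowth : (k + 1 : ℝ) * (tailSeries k y - tailSeries k x) ≤
      (y - x) * (tailSeries k y * tailSeries k x) :=
    mul_tsum_sub_tsum_le_of_mul_coeff_le (fun n => (tailCoeff_pos k n).le)
      (succ_mul_tailCoeff_le k) hx hxy.le (summable_tailCoeff_mul_pow k y)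
  have hdecay : k / tailSeries k x - k / tailSeries k y < y - x :=
    calc k / tailSeries k x - k / tailSeries k y
        = k / (k + 1) * ((k + 1) * (tailSeries k y - tailSeries k x) /
            (tailSeries k y * tailSeries k x)) := by field_simp
      _ ≤ k / (k + 1) * (y - x) := by
        gcongr
        rwa [div_le_iff₀ (by positivity)]
      _ < y - x :=
        mul_lt_of_lt_one_left (sub_pos.mpr hxy) (by rw [div_lt_one (by positivity)]; linarith)
  show x + k / tailSeries k x < y + k / tailSeries k y
  linarith

lemma bijOn_add_div_tailSeries (k : ℕ) :
    Set.BijOn (fun l => l + k / tailSeries k l) (Set.Ioi 0) (Set.Ioi (k : ℝ)) := by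
  have hmono := strictMonoOn_add_div_tailSeries k
  refine ⟨fun l hl => ?_, (hmono.mono Set.Ioi_subset_Ici_self).injOn, fun t ht => ?_⟩
  · simpa using hmono Set.self_mem_Ici (Set.Ioi_subset_Ici_self hl) hl
  · have ht0 : (0 : ℝ) ≤ t := (Nat.cast_nonneg k).trans (le_of_lt ht)
    have hcont : ContinuousOn (fun l => l + k / tailSeries k l) (Set.Icc 0 t) :=
      continuousOn_id.add (continuousOn_const.div (continuousOn_tailSeries k t)
        fun l hl => (tailSeries_pos k hl.1).ne')
    have hkt : 0 ≤ k / tailSeries k t := div_nonneg (Nat.cast_nonneg k) (tailSeries_pos k ht0).le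
    obtain ⟨l, hl, hlt⟩ := intermediate_value_Icc ht0 hcont
      ⟨by simpa using le_of_lt ht, by simpa using hkt⟩
    refine ⟨l, lt_of_le_of_ne hl.1 ?_, hlt⟩
    rintro rfl
    simp only [tailSeries_zero, zero_add, div_one] at hlt
    exact ht.ne hlt

theorem stmt3 (k : ℕ) (hk : 1 ≤ k) :
    StrictMonoOn (fun l : ℝ => l * pf (k - 1) l / pf k l) (Set.Ioi 0) ∧
    Set.BijOn (fun l : ℝ => l * pf (k - 1) l / pf k l) (Set.Ioi 0) (Set.Ioi (k : ℝ)) := by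
  have hmean : Set.EqOn (fun l => l + k / tailSeries k l) (fun l => l * pf (k - 1) l / pf k l)
      (Set.Ioi 0) := fun l hl => (mul_pf_pred_div_pf hk hl).symm
  exact ⟨((strictMonoOn_add_div_tailSeries k).mono Set.Ioi_subset_Ici_self).congr hmean,
    (bijOn_add_div_tailSeries k).congr hmean⟩
end

section
/- For any fixed integer k ≥ 2, the function ψ(x) = e^{-λ(x)} λ(x)^{k-1} / (f_{k-1}(λ(x)) (k-1)!), where λ(x) is the unique root of λ f_{k-1}(λ) = x f_k(λ), is strictly decreasing on (k, ∞). -/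
/-!
Write `pf t λ = e^{-λ} λ^t / t! * F_t(λ)` with `F_t(λ) = ∑ⱼ t!/(t+j)! λ^j`. Then
`ψ(x) = 1 / F_{k-1}(λ(x))` and the defining equation of `λ(x)` reads
`x = k F_{k-1}(λ) / F_k(λ)`. The coefficient ratio of `F_{k-1}` to `F_k` is increasing in `j`,
so a symmetrisation of the double series shows that `F_{k-1} / F_k` is monotone in `λ`; hence
`x ↦ λ(x)` is strictly increasing, and `ψ` strictly decreasing because `F_{k-1}` is strictly
increasing.
-/

open MeasureTheory Filter Finset

theorem tsum_mul_tsum_le_of_ratio_mono {ι : Type*} [LinearOrder ι] {c d u v : ι → ℝ}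
    (hc : ∀ i, 0 ≤ c i) (hd : ∀ i, 0 ≤ d i) (hu : ∀ i, 0 ≤ u i) (hv : ∀ i, 0 ≤ v i)
    (hcu : Summable fun i => c i * u i) (hcv : Summable fun i => c i * v i)
    (hdu : Summable fun i => d i * u i) (hdv : Summable fun i => d i * v i)
    (hcd : ∀ i j, j ≤ i → c j * d i ≤ c i * d j)
    (huv : ∀ i j, j ≤ i → u j * v i ≤ u i * v j) :
    (∑' i, c i * v i) * (∑' i, d i * u i) ≤ (∑' i, c i * u i) * (∑' i, d i * v i) := by
  set P : ι × ι → ℝ := fun z => c z.1 * v z.1 * (d z.2 * u z.2)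
  set Q : ι × ι → ℝ := fun z => c z.1 * u z.1 * (d z.2 * v z.2)
  have hP : Summable P :=
    hcv.mul_of_nonneg hdu (fun i => mul_nonneg (hc i) (hv i)) (fun i => mul_nonneg (hd i) (hu i))
  have hQ : Summable Q :=
    hcu.mul_of_nonneg hdv (fun i => mul_nonneg (hc i) (hu i)) (fun i => mul_nonneg (hd i) (hv i))
  -- `Q - P`, symmetrised in `(i, j)`, is `(c i d j - c j d i) (u i v j - u j v i) ≥ 0`.
  have hpair : ∀ z : ι × ι, P z + P z.swap ≤ Q z + Q z.swap := by
    rintro ⟨i, j⟩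
    have key : 0 ≤ (c i * d j - c j * d i) * (u i * v j - u j * v i) := by
      rcases le_total j i with h | h
      · exact mul_nonneg (sub_nonneg.2 (hcd i j h)) (sub_nonneg.2 (huv i j h))
      · exact mul_nonneg_of_nonpos_of_nonpos (sub_nonpos.2 (hcd j i h)) (sub_nonpos.2 (huv j i h))
    simp only [P, Q, Prod.swap]
    linarith
  have hswap : ∀ F : ι × ι → ℝ, ∑' z : ι × ι, F z.swap = ∑' z, F z :=
    (Equiv.prodComm ι ι).tsum_eq
  have hsym := (hP.add hP.prod_symm).tsum_le_tsum hpair (hQ.add hQ.prod_symm)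
  rw [hP.tsum_add hP.prod_symm, hQ.tsum_add hQ.prod_symm, hswap, hswap] at hsym
  rw [hcv.tsum_mul_tsum hdu hP, hcu.tsum_mul_tsum hdv hQ]
  linarith

open scoped Nat

theorem factorial_div_factorial_add_le_inv_factorial (t j : ℕ) :
    (t ! : ℝ) / (t + j)! ≤ (j ! : ℝ)⁻¹ := by
  rw [div_le_iff₀ (by positivity), ← div_eq_inv_mul, le_div_iff₀ (by positivity)]
  exact_mod_cast Nat.le_of_dvd (Nat.factorial_pos _)
    (Nat.factorial_mul_factorial_dvd_factorial_add t j)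

theorem summable_factorial_div_factorial_add_mul_pow (t : ℕ) (l : ℝ) :
    Summable fun j : ℕ => (t ! : ℝ) / (t + j)! * l ^ j := by
  refine (Real.summable_pow_div_factorial |l|).of_norm_bounded fun j => ?_
  rw [norm_mul, norm_pow, norm_div, Real.norm_natCast, Real.norm_natCast, Real.norm_eq_abs,
    div_eq_inv_mul _ (j ! : ℝ)]
  exact mul_le_mul_of_nonneg_right (factorial_div_factorial_add_le_inv_factorial t j)
    (by positivity)

theorem factorial_succ_div_factorial_add_succ (t i : ℕ) :
    ((t + 1)! : ℝ) / (t + 1 + i)! = (t ! : ℝ) / (t + i)! * ((t + 1 : ℝ) / (t + i + 1)) := by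
  rw [show t + 1 + i = t + i + 1 by omega, Nat.factorial_succ, Nat.factorial_succ]
  push_cast
  field_simp

noncomputable def pfNormalized (t : ℕ) (l : ℝ) : ℝ :=
  ∑' j : ℕ, (t ! : ℝ) / (t + j)! * l ^ j

theorem pf_eq_pfNormalized (t : ℕ) (l : ℝ) :
    pf t l = Real.exp (-l) * (l ^ t / t ! * pfNormalized t l) := by
  have hs : Summable fun i : ℕ => if t ≤ i then l ^ i / (i ! : ℝ) else 0 :=
    (Real.summable_pow_div_factorial |l|).of_norm_bounded fun i => by
      split_ifs
      · simp
      · simp only [norm_zero]; positivity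
  rw [pf, pfNormalized, ← hs.sum_add_tsum_nat_add t, ← tsum_mul_left,
    Finset.sum_eq_zero fun i hi => if_neg (by simpa using Finset.mem_range.mp hi), zero_add]
  congr 1
  refine tsum_congr fun j => ?_
  rw [if_pos (by omega), add_comm j t, pow_add]
  field_simp

theorem pfNormalized_pos (t : ℕ) {l : ℝ} (hl : 0 ≤ l) : 0 < pfNormalized t l :=
  (summable_factorial_div_factorial_add_mul_pow t l).tsum_pos (fun j => by positivity) 0
    (by simp [Nat.factorial_ne_zero])

theorem strictMonoOn_pfNormalized (t : ℕ) : StrictMonoOn (pfNormalized t) (Set.Ici 0) := by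
  intro a (ha : 0 ≤ a) b _ hab
  refine (summable_factorial_div_factorial_add_mul_pow t a).tsum_lt_tsum (i := 1)
    (fun j => ?_) ?_ (summable_factorial_div_factorial_add_mul_pow t b)
  · gcongr
  · simp only [pow_one]
    gcongr

theorem monotoneOn_pfNormalized_div_succ (t : ℕ) :
    MonotoneOn (fun l => pfNormalized t l / pfNormalized (t + 1) l) (Set.Ici 0) := by
  intro b (hb : 0 ≤ b) a (ha : 0 ≤ a) hba
  rw [div_le_div_iff₀ (pfNormalized_pos _ hb) (pfNormalized_pos _ ha)]
  have hs := summable_factorial_div_factorial_add_mul_pow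
  refine tsum_mul_tsum_le_of_ratio_mono (fun _ => by positivity) (fun _ => by positivity)
    (fun _ => by positivity) (fun _ => by positivity) (hs _ _) (hs _ _) (hs _ _) (hs _ _)
    (fun i j hji => ?_) (fun i j hji => ?_)
  · rw [factorial_succ_div_factorial_add_succ, factorial_succ_div_factorial_add_succ,
      mul_left_comm]
    have hr : (t + 1 : ℝ) / (t + i + 1) ≤ (t + 1) / (t + j + 1) := by gcongr
    exact mul_le_mul_of_nonneg_left (mul_le_mul_of_nonneg_left hr (by positivity))
      (by positivity)
  · obtain ⟨m, rfl⟩ := Nat.exists_eq_add_of_le hji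
    calc a ^ j * b ^ (j + m) = a ^ j * b ^ j * b ^ m := by ring
      _ ≤ a ^ j * b ^ j * a ^ m := by gcongr
      _ = a ^ (j + m) * b ^ j := by ring

theorem eq_mul_pfNormalized_div_of_mul_pf_eq (t : ℕ) {x a : ℝ} (ha : 0 < a)
    (h : a * pf t a = x * pf (t + 1) a) :
    x = (t + 1) * (pfNormalized t a / pfNormalized (t + 1) a) := by
  rw [pf_eq_pfNormalized, pf_eq_pfNormalized, Nat.factorial_succ] at h
  have := (pfNormalized_pos (t + 1) ha.le).ne'
  push_cast at h
  field_simp at h ⊢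
  rw [← pow_succ'] at h
  apply mul_left_cancel₀ (pow_ne_zero (t + 1) ha.ne')
  linear_combination -h

theorem exp_neg_mul_pow_div_pf_mul_factorial_eq_inv (t : ℕ) {a : ℝ} (ha : 0 < a) :
    Real.exp (-a) * a ^ t / (pf t a * t !) = (pfNormalized t a)⁻¹ := by
  rw [pf_eq_pfNormalized]
  have := (pfNormalized_pos t ha.le).ne'
  field_simp

theorem stmt4 (k : ℕ) (hk : 2 ≤ k) (lam : ℝ → ℝ)
    (hlam : ∀ x : ℝ, (k : ℝ) < x →
      0 < lam x ∧ lam x * pf (k - 1) (lam x) = x * pf k (lam x)) :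
    StrictAntiOn
      (fun x : ℝ => Real.exp (-(lam x)) * (lam x) ^ (k - 1) /
        (pf (k - 1) (lam x) * (Nat.factorial (k - 1))))
      (Set.Ioi (k : ℝ)) := by
  obtain ⟨t, rfl⟩ : ∃ t, k = t + 1 := ⟨k - 1, by omega⟩
  simp only [Nat.add_sub_cancel] at hlam ⊢
  intro x hx y hy hxy
  obtain ⟨hx0, hx⟩ := hlam x hx
  obtain ⟨hy0, hy⟩ := hlam y hy
  have hlt : lam x < lam y := by
    by_contra! hle
    have := monotoneOn_pfNormalized_div_succ t hy0.le hx0.le hle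
    rw [eq_mul_pfNormalized_div_of_mul_pf_eq t hx0 hx,
      eq_mul_pfNormalized_div_of_mul_pf_eq t hy0 hy] at hxy
    exact hxy.not_ge (mul_le_mul_of_nonneg_left this (by positivity))
  simp only [exp_neg_mul_pow_div_pf_mul_factorial_eq_inv t hx0,
    exp_neg_mul_pow_div_pf_mul_factorial_eq_inv t hy0]
  exact inv_strictAntiOn (pfNormalized_pos t hx0.le) (pfNormalized_pos t hy0.le)
    (strictMonoOn_pfNormalized t hx0.le hy0.le hlt)
end

section
/- For integers r ≥ 2, k ≥ 2 with (r,k) ≠ (2,2), the minimizer μ_{r,k} of h(μ) = μ/f_k(μ)^{r-1} is unique: h is strictly convex-like in the sense that h'(μ) = 0 has exactly one solution μ > 0. -/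
/-!
Write `pf k x = e^{-x} x^k φ_k(x)` with `φ_k(x) = ∑_j x^j / (j + k)!` (`expTail`). As
`pf (k + 1)' x = e^{-x} x^k / k!`, the critical-point equation `pf k μ = (r - 1) μ (pf k)' μ` of
`μ / (pf k μ)^(r-1)` becomes `φ_k(μ) = (r - 1) / (k - 1)!`. On `[0, ∞)` the series `φ_k` is
continuous and strictly increasing, starts at `1 / k!` and is unbounded, and
`1 / k! < (r - 1) / (k - 1)!` because `(r - 1) k > 1`; so this equation has exactly one positive
root.
-/

open MeasureTheory Filter Finset

open Nat Real

noncomputable def expPartialSum (k : ℕ) (x : ℝ) : ℝ := ∑ i ∈ range k, x ^ i / i !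

noncomputable def expTail (k : ℕ) (x : ℝ) : ℝ := ∑' j : ℕ, x ^ j / (j + k)!

lemma norm_pow_div_factorial_add_le (k j : ℕ) (x : ℝ) :
    ‖x ^ j / ((j + k)! : ℝ)‖ ≤ |x| ^ j / j ! := by
  rw [norm_div, norm_pow, Real.norm_eq_abs, RCLike.norm_natCast]
  gcongr
  exact le_add_right j k

lemma summable_expTail (k : ℕ) (x : ℝ) : Summable fun j : ℕ => x ^ j / (j + k)! :=
  (summable_pow_div_factorial |x|).of_norm_bounded (norm_pow_div_factorial_add_le k · x)

lemma continuous_expTail (k : ℕ) : Continuous (expTail k) := by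
  have hOn : ∀ R : ℝ, ContinuousOn (expTail k) (Set.Icc (-R) R) := fun R =>
    continuousOn_tsum (fun j => by fun_prop) (summable_pow_div_factorial R) fun j x hx =>
      (norm_pow_div_factorial_add_le k j x).trans (by gcongr; exact abs_le.2 hx)
  refine continuous_iff_continuousAt.2 fun x => (hOn (|x| + 1)).continuousAt (Icc_mem_nhds ?_ ?_)
  · linarith [neg_abs_le x]
  · linarith [le_abs_self x]

lemma expTail_zero (k : ℕ) : expTail k 0 = 1 / k ! := by
  rw [expTail, tsum_eq_single 0 fun j hj => by simp [hj]]
  simp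

lemma div_factorial_le_expTail (k : ℕ) {x : ℝ} (hx : 0 ≤ x) :
    x / (k + 1)! ≤ expTail k x := by
  simpa [expTail, add_comm 1 k] using
    (summable_expTail k x).le_tsum 1 fun j _ => by positivity

lemma strictMonoOn_expTail (k : ℕ) : StrictMonoOn (expTail k) (Set.Ici 0) := by
  intro x (hx : 0 ≤ x) y _ hxy
  refine (summable_expTail k y).tsum_lt_tsum_of_nonneg (i := 1) (fun j => ?_) (fun j => ?_) ?_
  · positivity
  · gcongr
  · simpa using div_lt_div_of_pos_right hxy (by positivity)

lemma existsUnique_pos_expTail_eq {k : ℕ} {c : ℝ} (hc : 1 / k ! < c) :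
    ∃! x : ℝ, 0 < x ∧ expTail k x = c := by
  set b := c * (k + 1)! with hb_def
  have hc0 : 0 < c := (by positivity : (0 : ℝ) < 1 / k !).trans hc
  have hb : 0 ≤ b := by positivity
  have hcb : c ≤ expTail k b := by
    have := div_factorial_le_expTail k hb
    rwa [hb_def, mul_div_cancel_right₀ _ (by positivity)] at this
  obtain ⟨x, ⟨hx, -⟩, hxc⟩ := intermediate_value_Ioc hb (continuous_expTail k).continuousOn
    ⟨by rwa [expTail_zero], hcb⟩
  refine ⟨x, ⟨hx, hxc⟩, fun y ⟨hy, hyc⟩ => ?_⟩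
  exact (strictMonoOn_expTail k).injOn (Set.mem_Ici.2 hy.le) (Set.mem_Ici.2 hx.le)
    (hyc.trans hxc.symm)

lemma hasSum_exp_sub_expPartialSum (k : ℕ) (x : ℝ) :
    HasSum (fun j : ℕ => x ^ (j + k) / (j + k)!) (exp x - expPartialSum k x) :=
  (hasSum_nat_add_iff' k).2 (exp_eq_exp_ℝ ▸ NormedSpace.expSeries_div_hasSum_exp x)

lemma exp_sub_expPartialSum (k : ℕ) (x : ℝ) :
    exp x - expPartialSum k x = x ^ k * expTail k x := by
  have hterm : (fun j : ℕ => x ^ (j + k) / (j + k)!) = fun j => x ^ k * (x ^ j / (j + k)!) :=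
    funext fun j => by rw [pow_add]; ring
  refine (hasSum_exp_sub_expPartialSum k x).unique ?_
  rw [hterm]
  exact (summable_expTail k x).hasSum.mul_left (x ^ k)

lemma pf_eq_exp_neg_mul (k : ℕ) (x : ℝ) : pf k x = exp (-x) * (exp x - expPartialSum k x) := by
  have hzero : ∑ i ∈ range k, (if k ≤ i then x ^ i / i ! else 0 : ℝ) = 0 :=
    sum_eq_zero fun i hi => if_neg (not_le.2 (mem_range.1 hi))
  have hsum :
      HasSum (fun i : ℕ => if k ≤ i then x ^ i / i ! else 0) (exp x - expPartialSum k x) :=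
    (hasSum_nat_add_iff' k).1 <| by simpa [hzero] using hasSum_exp_sub_expPartialSum k x
  rw [pf, hsum.tsum_eq]

lemma hasDerivAt_expPartialSum_succ (k : ℕ) (x : ℝ) :
    HasDerivAt (expPartialSum (k + 1)) (expPartialSum k x) x := by
  induction k with
  | zero =>
    have hone : expPartialSum 1 = fun _ => 1 := funext fun y => by simp [expPartialSum]
    simpa [hone, expPartialSum] using hasDerivAt_const x (1 : ℝ)
  | succ k ih =>
    have hterm : HasDerivAt (fun y : ℝ => y ^ (k + 1) / (k + 1)!) (x ^ k / k !) x := by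
      refine ((hasDerivAt_pow (k + 1) x).div_const ((k + 1)! : ℝ)).congr_deriv ?_
      rw [factorial_succ]
      push_cast
      field_simp
    have hsucc : expPartialSum (k + 1 + 1) =
        fun y => expPartialSum (k + 1) y + y ^ (k + 1) / (k + 1)! :=
      funext fun y => sum_range_succ _ _
    rw [hsucc]
    exact (ih.add hterm).congr_deriv (sum_range_succ _ _).symm

lemma hasDerivAt_pf_succ (k : ℕ) (x : ℝ) :
    HasDerivAt (pf (k + 1)) (exp (-x) * (x ^ k / k !)) x := by
  have hexp_neg : HasDerivAt (fun y => exp (-y)) (-exp (-x)) x := by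
    simpa using (hasDerivAt_neg x).exp
  rw [show pf (k + 1) = _ from funext (pf_eq_exp_neg_mul (k + 1))]
  refine (hexp_neg.mul ((hasDerivAt_exp x).sub (hasDerivAt_expPartialSum_succ k x))).congr_deriv ?_
  have hstep : expPartialSum (k + 1) x = expPartialSum k x + x ^ k / k ! := sum_range_succ _ k
  rw [Pi.sub_apply, hstep]
  ring

lemma pf_eq_exp_neg_mul_pow_mul_expTail (k : ℕ) (x : ℝ) :
    pf k x = exp (-x) * (x ^ k * expTail k x) := by
  rw [pf_eq_exp_neg_mul, exp_sub_expPartialSum]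

lemma pf_pos (k : ℕ) {x : ℝ} (hx : 0 < x) : 0 < pf k x := by
  have := (div_pos hx (by positivity : (0 : ℝ) < (k + 1)!)).trans_le
    (div_factorial_le_expTail k hx.le)
  rw [pf_eq_exp_neg_mul_pow_mul_expTail]
  positivity

lemma deriv_div_pow_eq_zero_iff {g : ℝ → ℝ} {g' μ : ℝ} (n : ℕ) (hg : HasDerivAt g g' μ)
    (hg0 : g μ ≠ 0) :
    deriv (fun x => x / g x ^ (n + 1)) μ = 0 ↔ g μ = (n + 1) * μ * g' := by
  have hquot : HasDerivAt (fun x => x / g x ^ (n + 1)) _ μ :=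
    (hasDerivAt_id' μ).div (hg.pow (n + 1)) (pow_ne_zero _ hg0)
  rw [hquot.deriv, div_eq_zero_iff, or_iff_left (pow_ne_zero _ (pow_ne_zero _ hg0))]
  simp only [Nat.add_sub_cancel, Nat.cast_add, Nat.cast_one]
  constructor
  · intro h
    have h' : g μ ^ n * (g μ - (n + 1) * μ * g') = 0 := by linear_combination h
    exact sub_eq_zero.1 ((mul_eq_zero.1 h').resolve_left (pow_ne_zero _ hg0))
  · intro h
    linear_combination g μ ^ n * h

lemma pf_succ_eq_mul_iff (k : ℕ) {μ c : ℝ} (hμ : μ ≠ 0) :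
    pf (k + 1) μ = c * μ * (exp (-μ) * (μ ^ k / k !)) ↔ expTail (k + 1) μ = c / k ! := by
  have hrhs : c * μ * (exp (-μ) * (μ ^ k / k !)) = exp (-μ) * (μ ^ (k + 1) * (c / k !)) := by
    ring
  rw [pf_eq_exp_neg_mul_pow_mul_expTail, hrhs, mul_right_inj' (exp_pos _).ne',
    mul_right_inj' (pow_ne_zero _ hμ)]

theorem stmt18_general (r k : ℕ) (hr : 2 ≤ r) (hk : 2 ≤ k) :
    ∃! μ : ℝ, 0 < μ ∧ deriv (fun x : ℝ => x / (pf k x) ^ (r - 1)) μ = 0 := by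
  obtain ⟨n, rfl⟩ : ∃ n, r = n + 2 := ⟨r - 2, by omega⟩
  obtain ⟨m, rfl⟩ : ∃ m, k = m + 2 := ⟨k - 2, by omega⟩
  have hc : 1 / ((m + 2)! : ℝ) < (n + 1) / (m + 1)! := by
    rw [factorial_succ (m + 1), cast_mul, ← div_div, div_lt_div_iff_of_pos_right (by positivity)]
    push_cast
    rw [div_lt_iff₀ (by positivity)]
    nlinarith [(n.cast_nonneg : (0 : ℝ) ≤ n), (m.cast_nonneg : (0 : ℝ) ≤ m)]
  refine (existsUnique_congr fun μ => and_congr_right fun hμ => ?_).2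
    (existsUnique_pos_expTail_eq hc)
  rw [show n + 2 - 1 = n + 1 from rfl,
    deriv_div_pow_eq_zero_iff n (hasDerivAt_pf_succ (m + 1) μ) (pf_pos _ hμ).ne',
    pf_succ_eq_mul_iff _ hμ.ne']

theorem stmt18 (r k : ℕ) (hr : 2 ≤ r) (hk : 2 ≤ k) (hne : ¬(r = 2 ∧ k = 2)) :
    ∃! μ : ℝ, 0 < μ ∧ deriv (fun x : ℝ => x / (pf k x) ^ (r - 1)) μ = 0 :=
  stmt18_general r k hr hk
end
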